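/- arXiv:2402.11619 — 3 statements merged into one kernel-verified Lean document; each statement's English description precedes it below -/
import Mathlib

section
/- Suppose b is a Lascar tuple in Σ over e with e ∈ dcl(b). Then the map ν_b : S_b(b) → Gal_L(Σ, e) sending tp(σ(b)/b) to the coset [σ] = σ·Autf_L(Σ, e) is well-defined: for all σ, σ' ∈ Aut_e(Σ), if tp(σ(b)/b) = tp(σ'(b)/b) then σ·Autf_L(Σ, e) = σ'·Autf_L(Σ, e). -/
/- Framework: relativized Lascar groups of a first-order theory over a
hyperimaginary, following "Relativized Galois groups of first order theories
over a hyperimaginary" by H. Lee and J. Lee. -/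

open FirstOrder Cardinal Pointwise

universe u

namespace RelLascar

variable {L : FirstOrder.Language.{u, u}} {M : Type u} [L.Structure M]

/-- The group of automorphisms of the monster model `M`. -/
instance : Group (M ≃[L] M) where
  mul f g := f.comp g
  one := FirstOrder.Language.Equiv.refl L M
  inv f := f.symm
  mul_assoc f g h := (FirstOrder.Language.Equiv.comp_assoc h g f).symm
  one_mul := FirstOrder.Language.Equiv.refl_comp
  mul_one := FirstOrder.Language.Equiv.comp_refl
  inv_mul_cancel := FirstOrder.Language.Equiv.symm_comp_self

/-- Automorphisms act on the monster model. -/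
instance : MulAction (M ≃[L] M) M where
  smul f x := f x
  one_smul _ := rfl
  mul_smul _ _ _ := rfl

@[simp] theorem autSmul_def (f : M ≃[L] M) (x : M) : f • x = f x := rfl

/-- The solution set in `M` of a set of formulas in variables `ι` with
parameters `prm : π → M`. -/
def SolSet {ι π : Type u} (p : Set (L.Formula (ι ⊕ π))) (prm : π → M) : Set (ι → M) :=
  {v | ∀ φ ∈ p, φ.Realize (Sum.elim v prm)}

/-- A set of `ι`-tuples is type-definable over the parameters `prm`. -/
def TypeDefinableOver {ι π : Type u} (prm : π → M) (X : Set (ι → M)) : Prop :=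
  ∃ p : Set (L.Formula (ι ⊕ π)), X = SolSet p prm

/-- Two tuples have the same (complete) type over `∅`. -/
def SameTp {ι : Type u} (c d : ι → M) : Prop :=
  ∀ φ : L.Formula ι, φ.Realize c ↔ φ.Realize d

/-- `M` is a monster model with degree of saturation and strong homogeneity `κ`:
`κ` is uncountable, tuples of size `< κ` with the same type are conjugate under an
automorphism, and every partial type in `< κ` variables over `< κ` parameters that
is finitely realized in `M` is realized in `M`.  ("Small" means of size `< κ`.) -/
def IsMonster (κ : Cardinal.{u}) (L : FirstOrder.Language.{u, u}) (M : Type u) [L.Structure M] : Prop :=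
  ℵ₀ < κ ∧
  (∀ (ι : Type u) (c d : ι → M), #ι < κ → SameTp (L := L) (M := M) c d →
      ∃ f : M ≃[L] M, ∀ i, f (c i) = d i) ∧
  (∀ (ι π : Type u) (prm : π → M) (p : Set (L.Formula (ι ⊕ π))), #ι < κ → #π < κ →
      (∀ q : Finset (L.Formula (ι ⊕ π)), ↑q ⊆ p →
        ∃ v : ι → M, ∀ φ ∈ (q : Set (L.Formula (ι ⊕ π))), φ.Realize (Sum.elim v prm)) →
      ∃ v : ι → M, v ∈ SolSet p prm)

variable (κ : Cardinal.{u})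

section Hyperimaginary

/- The hyperimaginary `e = a_E`, where `E` is the `∅`-type-definable equivalence
relation defined by the set of formulas `pE` and `a : γ → M`. -/
variable {γ : Type u} (pE : Set (L.Formula (γ ⊕ γ))) (a : γ → M)

/-- The relation defined by a set of formulas in variables `δ ⊕ δ` (with no
parameters); for `pE` this is the equivalence relation `E`. -/
def Frel {δ : Type u} (pF : Set (L.Formula (δ ⊕ δ))) (x y : δ → M) : Prop :=
  ∀ φ ∈ pF, φ.Realize (Sum.elim x y)

/-- The class of a tuple `x` under the relation defined by `pF`; for an
equivalence relation this is the hyperimaginary `x_F` (as a set of representatives). -/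
def Fclass {δ : Type u} (pF : Set (L.Formula (δ ⊕ δ))) (x : δ → M) : Set (δ → M) :=
  {y | Frel pF x y}

/-- `Aut_e(𝔠)`: the subgroup of automorphisms fixing the hyperimaginary
`e = a_E` setwise. -/
def AutE : Subgroup (M ≃[L] M) := MulAction.stabilizer (M ≃[L] M) (Fclass pE a)

/-- `Aut_e(𝔠)` as a group. -/
abbrev Ge := ↥(AutE pE a)

/-- The hyperimaginary `e` is definable over the tuple `t` (i.e. `e ∈ dcl(t)`):
every automorphism fixing `t` pointwise fixes `e`. -/
def eInDclTuple {ι : Type u} (t : ι → M) : Prop :=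
  ∀ f : M ≃[L] M, (∀ i, f (t i) = t i) → f ∈ AutE pE a

/-- The set of elements of `Aut_e(𝔠)` fixing pointwise some small elementary
substructure (model) `N` with `e ∈ dcl(N)`. -/
def modelFixers : Set (Ge pE a) :=
  {f | ∃ N : L.ElementarySubstructure M, #N < κ ∧
        (∀ g : M ≃[L] M, (∀ x ∈ N, g x = x) → g ∈ AutE pE a) ∧
        ∀ x ∈ N, (f : M ≃[L] M) x = x}

/-- `Autf_L(𝔠, e)`: the normal subgroup of `Aut_e(𝔠)` generated by the
pointwise stabilizers of small models `N` with `e ∈ dcl(N)`. -/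
def AutfL : Subgroup (Ge pE a) := Subgroup.normalClosure (modelFixers κ pE a)

/-- `c ≡ᴸ_e d` : the tuples have the same Lascar strong type over `e`. -/
def LEq {ι : Type u} (c d : ι → M) : Prop := ∃ f ∈ AutfL κ pE a, f • c = d

theorem LEq.refl {ι : Type u} (c : ι → M) : LEq κ pE a c c :=
  ⟨1, one_mem _, one_smul _ _⟩

theorem LEq.symm {ι : Type u} {c d : ι → M} (h : LEq κ pE a c d) : LEq κ pE a d c := by
  obtain ⟨f, hf, rfl⟩ := h
  exact ⟨f⁻¹, inv_mem hf, inv_smul_smul f c⟩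

theorem LEq.trans {ι : Type u} {c d e : ι → M} (h1 : LEq κ pE a c d)
    (h2 : LEq κ pE a d e) : LEq κ pE a c e := by
  obtain ⟨f, hf, rfl⟩ := h1
  obtain ⟨g, hg, rfl⟩ := h2
  exact ⟨g * f, mul_mem hg hf, (mul_smul g f c).symm ▸ rfl⟩

end Hyperimaginary

section Sigma

variable {γ : Type u} (pE : Set (L.Formula (γ ⊕ γ))) (a : γ → M)
variable {V β : Type u} {pS : Set (L.Formula (V ⊕ β))} {bp : β → M}

/-- The solution set `Σ(𝔠)` of the partial type `Σ` (given by formulas `pS` over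
the parameters `bp`). -/
abbrev Sol (pS : Set (L.Formula (V ⊕ β))) (bp : β → M) : Set (V → M) := SolSet pS bp

/-- The type of realizations of `Σ`. -/
abbrev SolT (pS : Set (L.Formula (V ⊕ β))) (bp : β → M) := ↥(Sol pS bp)

variable (pS bp) in
/-- The partial type `Σ` is `e`-invariant. -/
def SolInv : Prop := ∀ (g : Ge pE a) (v : V → M), v ∈ Sol pS bp → g • v ∈ Sol pS bp

/-- The restriction homomorphism `Aut_e(𝔠) → Perm(Σ(𝔠))`, `f ↦ f ↾ Σ(𝔠)`. -/
def resPerm (hInv : SolInv pE a pS bp) : Ge pE a →* Equiv.Perm (SolT pS bp) where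
  toFun g :=
    { toFun := fun v => ⟨g • (v : V → M), hInv g v v.2⟩
      invFun := fun v => ⟨g⁻¹ • (v : V → M), hInv g⁻¹ v v.2⟩
      left_inv := fun v => Subtype.ext (inv_smul_smul g (v : V → M))
      right_inv := fun v => Subtype.ext (smul_inv_smul g (v : V → M)) }
  map_one' := Equiv.ext fun v => Subtype.ext (one_smul (Ge pE a) (v : V → M))
  map_mul' g h := Equiv.ext fun v => Subtype.ext (mul_smul g h (v : V → M))

/-- `Aut_e(Σ) = {f ↾ Σ(𝔠) : f ∈ Aut_e(𝔠)}`, as a subgroup of the permutations of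
`Σ(𝔠)`. -/
def AutES (hInv : SolInv pE a pS bp) : Subgroup (Equiv.Perm (SolT pS bp)) :=
  (resPerm pE a hInv).range

/-- `Aut_e(Σ)` as a group. -/
abbrev GS (hInv : SolInv pE a pS bp) := ↥(AutES pE a hInv)

/-- The restriction map `ξ : Aut_e(𝔠) → Aut_e(Σ)`. -/
def toGS (hInv : SolInv pE a pS bp) : Ge pE a →* GS pE a hInv :=
  (resPerm pE a hInv).rangeRestrict

/-- A tuple of realizations of `Σ`, flattened to a tuple of elements of `M`. -/
def flat {ι : Type u} (c : ι → SolT pS bp) : ι × V → M := fun p => (c p.1 : V → M) p.2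

theorem flat_toGS_smul (hInv : SolInv pE a pS bp) {ι : Type u} (g : Ge pE a)
    (c : ι → SolT pS bp) : flat ((toGS pE a hInv g) • c) = g • flat c := rfl

theorem flat_smul_of_res (hInv : SolInv pE a pS bp) {ι : Type u} {τ : GS pE a hInv}
    {g : Ge pE a} (hg : resPerm pE a hInv g = ↑τ) (c : ι → SolT pS bp) :
    flat (τ • c) = g • flat c := by
  have : τ = toGS pE a hInv g := Subtype.ext hg.symm
  subst this
  rfl

/-- `Autf_L(Σ, e)`: the subgroup of `Aut_e(Σ)` consisting of those restricted
automorphisms `σ` such that every small tuple of realizations of `Σ` has the same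
Lascar strong type over `e` as its image under `σ`. -/
def AutfLS (hInv : SolInv pE a pS bp) : Subgroup (GS pE a hInv) where
  carrier := {σ | ∀ (ι : Type u), #ι < κ → ∀ c : ι → SolT pS bp,
      LEq κ pE a (flat c) (flat (σ • c))}
  one_mem' := by
    intro ι _ c
    rw [one_smul]
    exact LEq.refl κ pE a _
  mul_mem' := by
    intro σ τ hσ hτ ι hι c
    rw [mul_smul]
    exact LEq.trans κ pE a (hτ ι hι c) (hσ ι hι (τ • c))
  inv_mem' := by
    intro σ hσ ι hι c
    have h := hσ ι hι (σ⁻¹ • c)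
    rw [smul_inv_smul] at h
    exact LEq.symm κ pE a h

theorem AutfLS_normal (hInv : SolInv pE a pS bp) : (AutfLS κ pE a hInv).Normal := by
  constructor
  intro σ hσ τ ι hι c
  obtain ⟨g, hg⟩ := τ.2
  have hginv : resPerm pE a hInv g⁻¹ = ↑τ⁻¹ := by
    rw [map_inv, hg]
    rfl
  obtain ⟨f, hf, hfe⟩ := hσ ι hι (τ⁻¹ • c)
  refine ⟨g * f * g⁻¹, (Subgroup.normalClosure_normal).conj_mem f hf g, ?_⟩
  have h1 : flat (τ⁻¹ • c) = g⁻¹ • flat c := flat_smul_of_res pE a hInv hginv c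
  have h2 : flat ((τ * σ * τ⁻¹) • c) = g • flat (σ • τ⁻¹ • c) := by
    rw [mul_smul, mul_smul]
    exact flat_smul_of_res pE a hInv hg _
  rw [h2, ← hfe, h1, ← mul_smul, ← mul_smul]

/-- The relativized Lascar group `Gal_L(Σ, e) = Aut_e(Σ) / Autf_L(Σ, e)`. -/
def GalL (hInv : SolInv pE a pS bp) := GS pE a hInv ⧸ AutfLS κ pE a hInv

/-- The projection `π_b : Aut_e(Σ) → Gal_L(Σ, e)`. -/
def projb (hInv : SolInv pE a pS bp) : GS pE a hInv → GalL κ pE a hInv :=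
  QuotientGroup.mk

/-- The projection `π_Σ : Aut_e(𝔠) → Gal_L(Σ, e)`. -/
def projS (hInv : SolInv pE a pS bp) : Ge pE a → GalL κ pE a hInv :=
  fun g => projb κ pE a hInv (toGS pE a hInv g)

/-- A Lascar tuple in `Σ` over `e`: a small tuple `b` of realizations of `Σ` such
that `Autf_L(Σ, e) = {σ ∈ Aut_e(Σ) : b ≡ᴸ_e σ(b)}`. -/
def IsLascarTuple (hInv : SolInv pE a pS bp) {ιb : Type u} (b : ιb → SolT pS bp) : Prop :=
  #ιb < κ ∧ ∀ σ : GS pE a hInv,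
    σ ∈ AutfLS κ pE a hInv ↔ LEq κ pE a (flat b) (flat (σ • b))

variable (pS bp) in
/-- `e ∈ dcl(Σ)`: there is a small tuple of realizations of `Σ` over which `e` is
definable. -/
def eInDclSigma : Prop :=
  ∃ (ι : Type u) (c : ι → SolT pS bp), #ι < κ ∧ eInDclTuple pE a (flat c)

/-- The complete type of the tuple `v` over the parameters `prm` (with both
indexed by `ι`): the set of formulas realized by `v` with parameters `prm`. -/
def tpOver {ι : Type u} (prm v : ι → M) : Set (L.Formula (ι ⊕ ι)) :=
  {φ | φ.Realize (Sum.elim v prm)}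

/-- The type space `S_b(b) = {tp(f(b)/b) : f ∈ Aut_e(𝔠)}` over a tuple `b` of
realizations of `Σ`. -/
def Sb {ιb : Type u} (b : ιb → SolT pS bp) :
    Set (Set (L.Formula ((ιb × V) ⊕ (ιb × V)))) :=
  Set.range fun g : Ge pE a => tpOver (flat b) (g • flat b)

/-- The logic topology on a set of types: the subspace topology induced from the
product topology on `Formula → Bool` via characteristic functions. -/
noncomputable def typeSetTop {F : Type u} (X : Set (Set F)) : TopologicalSpace ↥X :=
  TopologicalSpace.induced
    (fun p (φ : F) => (p : Set F).boolIndicator φ) inferInstance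

/-- The map `ν_b : S_b(b) → Gal_L(Σ, e)`, `tp(σ(b)/b) ↦ [σ]`. -/
noncomputable def nub (hInv : SolInv pE a pS bp) {ιb : Type u} (b : ιb → SolT pS bp) :
    ↥(Sb pE a b) → GalL κ pE a hInv :=
  fun p => projS κ pE a hInv (Set.mem_range.mp p.2).choose

/-- The topology `𝔱_b` on the relativized Lascar group `Gal_L(Σ, e)`: the quotient
topology induced by `ν_b` from the logic topology on `S_b(b)`. -/
noncomputable def galTopb (hInv : SolInv pE a pS bp) {ιb : Type u}
    (b : ιb → SolT pS bp) : TopologicalSpace (GalL κ pE a hInv) :=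
  (typeSetTop (Sb pE a b)).coinduced (nub κ pE a hInv b)

end Sigma

section GalT

variable {γ : Type u} (pE : Set (L.Formula (γ ⊕ γ))) (a : γ → M)

/-- The Lascar group `Gal_L(T, e) = Aut_e(𝔠) / Autf_L(𝔠, e)`. -/
def GalT := Ge pE a ⧸ AutfL κ pE a

/-- The projection `π : Aut_e(𝔠) → Gal_L(T, e)`. -/
def projT : Ge pE a → GalT κ pE a := QuotientGroup.mk

/-- The type space `S_N(N) = {tp(f(N)/N) : f ∈ Aut_e(𝔠)}` over a small model `N`. -/
def SMod (N : L.ElementarySubstructure M) : Set (Set (L.Formula (↥N ⊕ ↥N))) :=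
  Set.range fun g : Ge pE a =>
    tpOver (Subtype.val : ↥N → M) (g • (Subtype.val : ↥N → M))

/-- The map `ν : S_N(N) → Gal_L(T, e)`, `tp(f(N)/N) ↦ [f]`. -/
noncomputable def nuT (N : L.ElementarySubstructure M) :
    ↥(SMod pE a N) → GalT κ pE a :=
  fun p => projT κ pE a (Set.mem_range.mp p.2).choose

/-- The standard quotient topology on the Lascar group `Gal_L(T, e)` induced via
the type space over a small model `N` (with `e ∈ dcl(N)`). -/
noncomputable def galTopT (N : L.ElementarySubstructure M) :
    TopologicalSpace (GalT κ pE a) :=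
  (typeSetTop (SMod pE a N)).coinduced (nuT κ pE a N)

/-- `Autf_KP(𝔠, e)`: the preimage under `π` of the closure of the identity in
`Gal_L(T, e)`. -/
noncomputable def AutfKPset (N : L.ElementarySubstructure M) : Set (Ge pE a) :=
  projT κ pE a ⁻¹' (@closure _ (galTopT κ pE a N) {projT κ pE a 1})

/-- `Autf_S(𝔠, e)`: the preimage under `π` of the connected component of the
identity in `Gal_L(T, e)`. -/
noncomputable def AutfSset (N : L.ElementarySubstructure M) : Set (Ge pE a) :=
  projT κ pE a ⁻¹' (@connectedComponent _ (galTopT κ pE a N) (projT κ pE a 1))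

/-- `c ≡ᴷᴾ_e d` : the tuples have the same KP strong type over `e`. -/
def KPeq (N : L.ElementarySubstructure M) {ι : Type u} (c d : ι → M) : Prop :=
  ∃ f ∈ AutfKPset κ pE a N, f • c = d

/-- `c ≡ˢ_e d` : the tuples have the same Shelah strong type over `e`. -/
def Seq (N : L.ElementarySubstructure M) {ι : Type u} (c d : ι → M) : Prop :=
  ∃ f ∈ AutfSset κ pE a N, f • c = d

end GalT

section Relativized

variable {γ : Type u} (pE : Set (L.Formula (γ ⊕ γ))) (a : γ → M)
variable {V β : Type u} {pS : Set (L.Formula (V ⊕ β))} {bp : β → M}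

/-- `Autf_KP(Σ, e)`: the set of restricted automorphisms fixing the KP strong
type of every small tuple of realizations of `Σ`. -/
noncomputable def AutfKPSset (hInv : SolInv pE a pS bp) (N : L.ElementarySubstructure M) :
    Set (GS pE a hInv) :=
  {σ | ∀ (ι : Type u), #ι < κ → ∀ c : ι → SolT pS bp,
      KPeq κ pE a N (flat c) (flat (σ • c))}

/-- `Autf_S(Σ, e)`: the set of restricted automorphisms fixing the Shelah strong
type of every small tuple of realizations of `Σ`. -/
noncomputable def AutfSSset (hInv : SolInv pE a pS bp) (N : L.ElementarySubstructure M) :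
    Set (GS pE a hInv) :=
  {σ | ∀ (ι : Type u), #ι < κ → ∀ c : ι → SolT pS bp,
      Seq κ pE a N (flat c) (flat (σ • c))}

/-- The orbit under `Aut_e(𝔠)` of the hyperimaginary given by the class of `x`
under the relation defined by `pF` is small ("`x_F` is bounded over `e`"). -/
def BoundedClass {δ : Type u} (pF : Set (L.Formula (δ ⊕ δ))) (x : δ → M) : Prop :=
  #↥(Set.range fun g : Ge pE a => g • Fclass pF x) < κ

/-- The orbit under `Aut_e(𝔠)` of the hyperimaginary given by the class of `x` is
finite ("`x_F` is algebraic over `e`"). -/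
def FiniteClass {δ : Type u} (pF : Set (L.Formula (δ ⊕ δ))) (x : δ → M) : Prop :=
  (Set.range fun g : Ge pE a => g • Fclass pF x).Finite

/-- `f` fixes the hyperimaginary given by the class of `x` (setwise). -/
def FixesClass (f : Ge pE a) {δ : Type u} (pF : Set (L.Formula (δ ⊕ δ)))
    (x : δ → M) : Prop :=
  f • Fclass pF x = Fclass pF x

variable (pS bp) in
/-- `f` fixes every hyperimaginary that is bounded over `e` and has a
representative which is a small tuple of realizations of `Σ`, i.e. `f` fixes
`bdd(e) ∩ Σ` pointwise. -/
def fixesAllBddS (f : Ge pE a) : Prop :=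
  ∀ (ι : Type u) (pF : Set (L.Formula ((ι × V) ⊕ (ι × V)))) (c : ι → SolT pS bp),
    #ι < κ → Equivalence (Frel (M := M) pF) → BoundedClass κ pE a pF (flat c) →
    FixesClass pE a f pF (flat c)

variable (pS bp) in
/-- `f` fixes every hyperimaginary that is algebraic over `e` and has a
representative which is a small tuple of realizations of `Σ`, i.e. `f` fixes
`acl(e) ∩ Σ` pointwise. -/
def fixesAllAclS (f : Ge pE a) : Prop :=
  ∀ (ι : Type u) (pF : Set (L.Formula ((ι × V) ⊕ (ι × V)))) (c : ι → SolT pS bp),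
    #ι < κ → Equivalence (Frel (M := M) pF) → FiniteClass pE a pF (flat c) →
    FixesClass pE a f pF (flat c)

end Relativized


section More

variable {γ : Type u} (pE : Set (L.Formula (γ ⊕ γ))) (a : γ → M)
variable {V β : Type u} {pS : Set (L.Formula (V ⊕ β))} {bp : β → M}

theorem mem_AutfLS_iff (hInv : SolInv pE a pS bp) {σ : GS pE a hInv} :
    σ ∈ AutfLS κ pE a hInv ↔ ∀ (ι : Type u), #ι < κ → ∀ c : ι → SolT pS bp,
      LEq κ pE a (flat c) (flat (σ • c)) := Iff.rfl

theorem toGS_mem_autfLS (hInv : SolInv pE a pS bp) {f : Ge pE a}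
    (hf : f ∈ AutfL κ pE a) : toGS pE a hInv f ∈ AutfLS κ pE a hInv :=
  (mem_AutfLS_iff κ pE a hInv).mpr
    (fun ι _ c => ⟨f, hf, (flat_toGS_smul pE a hInv f c).symm⟩)

instance AutfL_normal : (AutfL κ pE a).Normal :=
  Subgroup.normalClosure_normal

/-- The group structure of the relativized Lascar group `Gal_L(Σ, e)`. -/
noncomputable def galLGroup (hInv : SolInv pE a pS bp) : Group (GalL κ pE a hInv) :=
  @QuotientGroup.Quotient.group _ _ (AutfLS κ pE a hInv) (AutfLS_normal κ pE a hInv)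

/-- The natural projection `ξ_L : Gal_L(T, e) → Gal_L(Σ, e)`. -/
noncomputable def xiL (hInv : SolInv pE a pS bp) : GalT κ pE a → GalL κ pE a hInv :=
  haveI := AutfLS_normal κ pE a hInv
  ⇑(QuotientGroup.map (AutfL κ pE a) (AutfLS κ pE a hInv) (toGS pE a hInv)
    (fun _ hf => Subgroup.mem_comap.mpr (toGS_mem_autfLS κ pE a hInv hf)))

/-- The orbit equivalence relation `≡ᴴ` of a set `H` of restricted automorphisms,
on tuples of realizations of `Σ`. -/
def orbEq {hInv : SolInv pE a pS bp} (H : Set (GS pE a hInv)) {ι : Type u}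
    (c d : ι → SolT pS bp) : Prop :=
  ∃ h ∈ H, h • c = d

end More


section Statements

variable {γ : Type u} (pE : Set (L.Formula (γ ⊕ γ))) (a : γ → M)
variable {V β : Type u} {pS : Set (L.Formula (V ⊕ β))} {bp : β → M}


/-- Remark 2.3: if `b` is a Lascar tuple in `Σ` over `e` with
`e ∈ dcl(b)`, then the map `ν_b : S_b(b) → Gal_L(Σ, e)`, `tp(σ(b)/b) ↦ [σ]`, is
well-defined. -/
theorem nub_well_defined (hM : IsMonster κ L M) (hγ : #γ < κ)
    (hE : Equivalence (Frel (M := M) pE)) (hV : #V < κ) (hβ : #β < κ)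
    (hInv : SolInv pE a pS bp)
    {ιb : Type u} (b : ιb → SolT pS bp)
    (hb : IsLascarTuple κ pE a hInv b) (hbdcl : eInDclTuple pE a (flat b))
    (σ σ' : GS pE a hInv)
    (h : tpOver (L := L) (flat b) (flat (σ • b)) = tpOver (L := L) (flat b) (flat (σ' • b))) :
    projb κ pE a hInv σ = projb κ pE a hInv σ' := by
  classical
  obtain ⟨hιb, hbL⟩ := hb
  have hcard : #((ιb × V) ⊕ (ιb × V)) < κ := by
    have h1 : #(ιb × V) < κ := by
      rw [Cardinal.mk_prod]
      simp only [Cardinal.lift_id]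
      exact Cardinal.mul_lt_of_lt hM.1.le hιb hV
    rw [Cardinal.mk_sum]
    simp only [Cardinal.lift_id]
    exact Cardinal.add_lt_of_lt hM.1.le h1 h1
  have hsame : SameTp (L := L)
      (Sum.elim (flat (σ • b)) (flat b)) (Sum.elim (flat (σ' • b)) (flat b)) :=
    fun φ => Set.ext_iff.mp h φ
  obtain ⟨f, hf⟩ := hM.2.1 _ _ _ hcard hsame
  have hfixb : ∀ p, f (flat b p) = flat b p := fun p => hf (Sum.inr p)
  have hmap : ∀ p, f (flat (σ • b) p) = flat (σ' • b) p := fun p => hf (Sum.inl p)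
  have hfE : f ∈ AutE pE a := hbdcl f hfixb
  set F : Ge pE a := ⟨f, hfE⟩ with hF
  set τ : GS pE a hInv := toGS pE a hInv F with hτ
  have flat_inj : ∀ {c d : ιb → SolT pS bp}, flat c = flat d → c = d := by
    intro c d hcd
    funext i; apply Subtype.ext; funext v
    exact congrFun hcd (i, v)
  have hτb : τ • b = b := by
    apply flat_inj
    rw [hτ, flat_toGS_smul pE a hInv F b]
    funext p; exact hfixb p
  have hτσ : τ • (σ • b) = σ' • b := by
    apply flat_inj
    rw [hτ, flat_toGS_smul pE a hInv F (σ • b)]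
    funext p; exact hmap p
  have hτN : τ ∈ AutfLS κ pE a hInv := by
    apply (hbL τ).mpr
    rw [hτb]
    exact LEq.refl κ pE a _
  have hA : σ'⁻¹ * τ * σ ∈ AutfLS κ pE a hInv := by
    apply (hbL _).mpr
    have hbb : (σ'⁻¹ * τ * σ) • b = b := by
      rw [mul_smul, mul_smul, hτσ, inv_smul_smul]
    rw [hbb]
    exact LEq.refl κ pE a _
  have hconj : σ⁻¹ * τ⁻¹ * σ ∈ AutfLS κ pE a hInv := by
    have := (AutfLS_normal κ pE a hInv).conj_mem τ⁻¹ (inv_mem hτN) σ⁻¹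
    simpa using this
  have hfin : σ'⁻¹ * σ ∈ AutfLS κ pE a hInv := by
    have hm := mul_mem hA hconj
    have heq : (σ'⁻¹ * τ * σ) * (σ⁻¹ * τ⁻¹ * σ) = σ'⁻¹ * σ := by group
    rwa [heq] at hm
  exact (QuotientGroup.eq.mpr hfin).symm

end Statements

end RelLascar
end

section
/- Assume e ∈ dcl(Σ) and fix a Lascar tuple b with e ∈ dcl(b). Let H be a subgroup of Aut_e(Σ) containing Autf_L(Σ, e) such that π_b[H] is a closed subgroup of Gal_L(Σ, e). Then for any tuples c and d of realizations of Σ, c ≡^H d if and only if for all corresponding finite subtuples c' and d' of c and d, c' ≡^H d'. -/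
/- Framework: relativized Lascar groups of a first-order theory over a
hyperimaginary, following "Relativized Galois groups of first order theories
over a hyperimaginary" by H. Lee and J. Lee. -/

open FirstOrder Cardinal Pointwise

universe u

namespace RelLascar

variable {L : FirstOrder.Language.{u, u}} {M : Type u} [L.Structure M]

variable (κ : Cardinal.{u})

section Statements

variable {γ : Type u} (pE : Set (L.Formula (γ ⊕ γ))) (a : γ → M)
variable {V β : Type u} {pS : Set (L.Formula (V ⊕ β))} {bp : β → M}


open FirstOrder.Language

theorem frel_smul_iff {δ : Type u} (pF : Set (L.Formula (δ ⊕ δ))) (g : M ≃[L] M)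
    (x y : δ → M) : Frel pF (g • x) (g • y) ↔ Frel (M := M) pF x y := by
  unfold Frel
  refine forall₂_congr fun φ _ => ?_
  have h : Sum.elim (g • x) (g • y) = ⇑g ∘ Sum.elim x y := by funext z; cases z <;> rfl
  rw [h, StrongHomClass.realize_formula]

theorem smul_fclass {δ : Type u} (pF : Set (L.Formula (δ ⊕ δ))) (g : M ≃[L] M)
    (x : δ → M) : g • Fclass pF x = Fclass (M := M) pF (g • x) := by
  ext y
  rw [Set.mem_smul_set_iff_inv_smul_mem]
  show Frel pF x (g⁻¹ • y) ↔ Frel pF (g • x) y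
  rw [← frel_smul_iff pF g x (g⁻¹ • y), smul_inv_smul]

theorem fclass_eq_of_frel {δ : Type u} {pF : Set (L.Formula (δ ⊕ δ))}
    (hF : Equivalence (Frel (M := M) pF)) {x y : δ → M} (h : Frel pF x y) :
    Fclass pF y = Fclass (M := M) pF x := by
  ext z
  exact ⟨fun hz => hF.trans h hz, fun hz => hF.trans (hF.symm h) hz⟩

theorem ge_frel (hE : Equivalence (Frel (M := M) pE)) (g : Ge pE a) :
    Frel pE a ((g : M ≃[L] M) • a) := by
  have h2 : (g : M ≃[L] M) • Fclass pE a = Fclass pE a := g.2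
  have h1 : (g : M ≃[L] M) • a ∈ (g : M ≃[L] M) • Fclass pE a :=
    Set.smul_mem_smul_set (hE.refl a)
  rw [h2] at h1
  exact h1

theorem flat_inj {ι : Type u} {c d : ι → SolT pS bp} (h : flat c = flat d) : c = d :=
  funext fun i => Subtype.ext (funext fun x => congrFun h (i, x))

theorem mem_autfLS_of_fixb (hInv : SolInv pE a pS bp) {ιb : Type u} {b : ιb → SolT pS bp}
    (hb : IsLascarTuple κ pE a hInv b) {g : Ge pE a} (h : g • flat b = flat b) :
    toGS pE a hInv g ∈ AutfLS κ pE a hInv := by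
  have hb' : toGS pE a hInv g • b = b := flat_inj ((flat_toGS_smul pE a hInv g b).trans h)
  refine (hb.2 _).mpr ?_
  rw [hb']
  exact LEq.refl κ pE a _

theorem projb_eq_of_tpOver_eq (hM : IsMonster κ L M) (hV' : #V < κ)
    (hInv : SolInv pE a pS bp) {ιb : Type u} (b : ιb → SolT pS bp)
    (hb : IsLascarTuple κ pE a hInv b) (hbdcl : eInDclTuple pE a (flat b))
    {g g' : Ge pE a}
    (h : tpOver (L := L) (flat b) (g • flat b) = tpOver (L := L) (flat b) (g' • flat b)) :
    projb κ pE a hInv (toGS pE a hInv g) = projb κ pE a hInv (toGS pE a hInv g') := by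
  have hℵ : ℵ₀ ≤ κ := hM.1.le
  have hcard : #((ιb × V) ⊕ (ιb × V)) < κ := by
    have h1 : #(ιb × V) < κ := by
      simp only [Cardinal.mk_prod, Cardinal.lift_id]
      exact Cardinal.mul_lt_of_lt hℵ hb.1 hV'
    simp only [Cardinal.mk_sum, Cardinal.lift_id]
    exact Cardinal.add_lt_of_lt hℵ h1 h1
  have hsame : SameTp (L := L) (Sum.elim (g • flat b) (flat b))
      (Sum.elim (g' • flat b) (flat b)) := fun φ => Set.ext_iff.mp h φ
  obtain ⟨k, hk⟩ := hM.2.1 _ _ _ hcard hsame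
  have hkfix : ∀ j, k (flat b j) = flat b j := fun j => hk (Sum.inr j)
  have hkG : k ∈ AutE pE a := hbdcl k hkfix
  have h1 : (⟨k, hkG⟩ : Ge pE a) • (g • flat b) = g' • flat b := funext fun j => hk (Sum.inl j)
  have h4 : (⟨k, hkG⟩ : Ge pE a) • flat b = flat b := funext hkfix
  have h2 : (g'⁻¹ * ((⟨k, hkG⟩ : Ge pE a) * g)) • flat b = flat b := by
    rw [mul_smul, mul_smul, h1, inv_smul_smul]
  have h3 := mem_autfLS_of_fixb κ pE a hInv hb h2
  have h5 := mem_autfLS_of_fixb κ pE a hInv hb h4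
  rw [map_mul, map_mul, map_inv] at h3
  have hN : (AutfLS κ pE a hInv).Normal := AutfLS_normal κ pE a hInv
  have hmain : (toGS pE a hInv g)⁻¹ * toGS pE a hInv g' ∈ AutfLS κ pE a hInv := by
    have e1 : (toGS pE a hInv g)⁻¹ * toGS pE a hInv g'
        = ((toGS pE a hInv g)⁻¹ * toGS pE a hInv ⟨k, hkG⟩ * ((toGS pE a hInv g)⁻¹)⁻¹)
          * ((toGS pE a hInv g)⁻¹ * (toGS pE a hInv ⟨k, hkG⟩)⁻¹ * toGS pE a hInv g') := by
      group
    rw [e1]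
    refine mul_mem (hN.conj_mem _ h5 _) ?_
    have h6 := inv_mem h3
    convert h6 using 1
    group
  exact (QuotientGroup.eq (s := AutfLS κ pE a hInv)).mpr hmain

theorem nub_spec (hM : IsMonster κ L M) (hV' : #V < κ) (hInv : SolInv pE a pS bp)
    {ιb : Type u} (b : ιb → SolT pS bp) (hb : IsLascarTuple κ pE a hInv b)
    (hbdcl : eInDclTuple pE a (flat b)) (q : ↥(Sb pE a b)) (g : Ge pE a)
    (hg : tpOver (L := L) (flat b) (g • flat b) = ↑q) :
    nub κ pE a hInv b q = projb κ pE a hInv (toGS pE a hInv g) := by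
  have hspec := (Set.mem_range.mp q.2).choose_spec
  exact projb_eq_of_tpOver_eq κ pE a hM hV' hInv b hb hbdcl (hspec.trans hg.symm)

/-- Lemma 2.9(1): assuming `e ∈ dcl(Σ)` and given a Lascar
tuple `b` with `e ∈ dcl(b)`, if `H` is a subgroup of `Aut_e(Σ)` containing
`Autf_L(Σ, e)` such that `π_b[H]` is closed in `Gal_L(Σ, e)`, then for tuples
`c`, `d` of realizations of `Σ`: `c ≡ᴴ d` iff all corresponding finite
subtuples of `c` and `d` are `≡ᴴ`-equivalent. -/
theorem orbEq_iff_forall_finite_subtuple (hM : IsMonster κ L M) (hγ : #γ < κ)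
    (hE : Equivalence (Frel (M := M) pE)) (hV : #V < κ) (hβ : #β < κ)
    (hInv : SolInv pE a pS bp)
    (hedcl : eInDclSigma κ pE a pS bp)
    {ιb : Type u} (b : ιb → SolT pS bp)
    (hb : IsLascarTuple κ pE a hInv b) (hbdcl : eInDclTuple pE a (flat b))
    (H : Subgroup (GS pE a hInv)) (hLH : AutfLS κ pE a hInv ≤ H)
    (hcl : @IsClosed _ (galTopb κ pE a hInv b) (projb κ pE a hInv '' ↑H))
    {ι : Type u} (hι : #ι < κ) (c d : ι → SolT pS bp) :
    orbEq (hInv := hInv) pE a (↑H) c d ↔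
      ∀ J : Finset ι, orbEq (hInv := hInv) pE a (↑H) (fun j : ↥J => c ↑j) (fun j : ↥J => d ↑j) := by
  classical
  constructor
  · rintro ⟨h, hH, hhc⟩ J
    exact ⟨h, hH, funext fun j => congrFun hhc ↑j⟩
  · intro hfin
    have hfin' : ∀ J : Finset ι, ∃ h : GS pE a hInv, h ∈ (↑H : Set (GS pE a hInv)) ∧
        h • (fun j : ↥J => c ↑j) = fun j : ↥J => d ↑j := fun J => hfin J
    choose hh hhH hhs using hfin'
    choose g hg using fun J => MonoidHom.mem_range.mp (hh J).2
    have hgGS : ∀ J, toGS pE a hInv (g J) = hh J := fun J => Subtype.ext (hg J)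
    haveI : Nonempty (Finset ι) := ⟨∅⟩
    set U : Ultrafilter (Finset ι) := Ultrafilter.of Filter.atTop with hUdef
    have hU : ∀ J₀ : Finset ι, {J : Finset ι | J₀ ≤ J} ∈ (U : Filter (Finset ι)) :=
      fun J₀ => Filter.le_def.mp (Ultrafilter.of_le Filter.atTop) _ (Filter.mem_atTop J₀)
    set prm : ((ιb × V) ⊕ (γ ⊕ (ι × V))) → M := Sum.elim (flat b) (Sum.elim a (flat d)) with hprm
    set Wt : Finset ι → ((ιb × V) ⊕ (γ ⊕ (ι × V))) → M :=
      fun J => Sum.elim (g J • flat b) (Sum.elim (g J • a) (g J • flat c)) with hWt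
    set p : Set (L.Formula (((ιb × V) ⊕ (γ ⊕ (ι × V))) ⊕ ((ιb × V) ⊕ (γ ⊕ (ι × V))))) :=
      {φ | {J : Finset ι | φ.Realize (Sum.elim (Wt J) prm)} ∈ (U : Filter (Finset ι))} with hp
    have hℵ : ℵ₀ ≤ κ := hM.1.le
    have hprodk : ∀ {α' β' : Type u}, #α' < κ → #β' < κ → #(α' × β') < κ := by
      intro α' β' h1 h2
      simp only [Cardinal.mk_prod, Cardinal.lift_id]
      exact Cardinal.mul_lt_of_lt hℵ h1 h2
    have hsumk : ∀ {α' β' : Type u}, #α' < κ → #β' < κ → #(α' ⊕ β') < κ := by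
      intro α' β' h1 h2
      simp only [Cardinal.mk_sum, Cardinal.lift_id]
      exact Cardinal.add_lt_of_lt hℵ h1 h2
    have hA : #((ιb × V) ⊕ (γ ⊕ (ι × V))) < κ := hsumk (hprodk hb.1 hV) (hsumk hγ (hprodk hι hV))
    have hfs : ∀ q : Finset (L.Formula (((ιb × V) ⊕ (γ ⊕ (ι × V))) ⊕ ((ιb × V) ⊕ (γ ⊕ (ι × V))))),
        ↑q ⊆ p → ∃ w : ((ιb × V) ⊕ (γ ⊕ (ι × V))) → M,
          ∀ φ ∈ (↑q : Set (L.Formula (((ιb × V) ⊕ (γ ⊕ (ι × V))) ⊕ ((ιb × V) ⊕ (γ ⊕ (ι × V)))))),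
            φ.Realize (Sum.elim w prm) := by
      intro q hq
      have hint : (⋂ φ ∈ q, {J : Finset ι | φ.Realize (Sum.elim (Wt J) prm)})
          ∈ (U : Filter (Finset ι)) :=
        (Filter.biInter_finset_mem q).mpr fun φ hφ => hq hφ
      obtain ⟨J, hJ⟩ := Filter.nonempty_of_mem hint
      exact ⟨Wt J, fun φ hφ => Set.mem_iInter₂.mp hJ φ (Finset.mem_coe.mp hφ)⟩
    obtain ⟨v, hv⟩ := hM.2.2 _ _ prm p hA hA hfs
    have hvp : ∀ φ : L.Formula (((ιb × V) ⊕ (γ ⊕ (ι × V))) ⊕ ((ιb × V) ⊕ (γ ⊕ (ι × V)))),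
        {J : Finset ι | φ.Realize (Sum.elim (Wt J) prm)} ∈ (U : Filter (Finset ι)) →
        φ.Realize (Sum.elim v prm) := fun φ hφ => hv φ hφ
    -- the c-part of v equals flat d
    have hcd : ∀ iv : ι × V, v (Sum.inr (Sum.inr iv)) = flat d iv := by
      intro iv
      have hmemp : {J : Finset ι |
          (((Term.var (Sum.inl (Sum.inr (Sum.inr iv)))).equal
            (Term.var (Sum.inr (Sum.inr (Sum.inr iv)))) : L.Formula _)).Realize
            (Sum.elim (Wt J) prm)} ∈ (U : Filter (Finset ι)) := by
        refine Filter.mem_of_superset (hU {iv.1}) fun J hJ => ?_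
        have hmem : iv.1 ∈ J := Finset.singleton_subset_iff.mp (Finset.le_iff_subset.mp hJ)
        have h1 : flat (fun j : ↥J => d ↑j) = g J • flat (fun j : ↥J => c ↑j) := by
          rw [← hhs J]
          exact flat_smul_of_res pE a hInv (hg J) _
        have h2 := congrFun h1 (⟨iv.1, hmem⟩, iv.2)
        show (((Term.var (Sum.inl (Sum.inr (Sum.inr iv)))).equal
            (Term.var (Sum.inr (Sum.inr (Sum.inr iv)))) : L.Formula _)).Realize
            (Sum.elim (Wt J) prm)
        rw [Formula.realize_equal]
        simp only [Term.realize_var, Sum.elim_inl, Sum.elim_inr]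
        exact h2.symm
      have hre := hvp _ hmemp
      rw [Formula.realize_equal] at hre
      simp only [Term.realize_var, Sum.elim_inl, Sum.elim_inr] at hre
      exact hre
    -- the a-part of v is E-related to a
    have haE : Frel pE a (fun j => v (Sum.inr (Sum.inl j))) := by
      intro ψ hψ
      have hmemp : {J : Finset ι | (ψ.relabel (Sum.elim (fun j => Sum.inr (Sum.inr (Sum.inl j)))
          (fun j => Sum.inl (Sum.inr (Sum.inl j)))) : L.Formula _).Realize
          (Sum.elim (Wt J) prm)} ∈ (U : Filter (Finset ι)) := by
        refine Filter.univ_mem' fun J => ?_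
        show (ψ.relabel (Sum.elim (fun j => Sum.inr (Sum.inr (Sum.inl j)))
          (fun j => Sum.inl (Sum.inr (Sum.inl j)))) : L.Formula _).Realize (Sum.elim (Wt J) prm)
        rw [Formula.realize_relabel]
        have he : Sum.elim (Wt J) prm ∘ (Sum.elim (fun j => Sum.inr (Sum.inr (Sum.inl j)))
            (fun j : γ => Sum.inl (Sum.inr (Sum.inl j)))) = Sum.elim a ((g J : M ≃[L] M) • a) := by
          funext z; cases z <;> rfl
        rw [he]
        exact ge_frel pE a hE (g J) ψ hψ
      have hre := hvp _ hmemp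
      rw [Formula.realize_relabel] at hre
      have he : Sum.elim v prm ∘ (Sum.elim (fun j => Sum.inr (Sum.inr (Sum.inl j)))
          (fun j : γ => Sum.inl (Sum.inr (Sum.inl j))))
          = Sum.elim a (fun j => v (Sum.inr (Sum.inl j))) := by
        funext z; cases z <;> rfl
      rw [he] at hre
      exact hre
    -- v has the same type as (flat b, a, flat c)
    have hsame : SameTp (L := L) (Sum.elim (flat b) (Sum.elim a (flat c))) v := by
      have hdir : ∀ χ : L.Formula ((ιb × V) ⊕ (γ ⊕ (ι × V))),
          χ.Realize (Sum.elim (flat b) (Sum.elim a (flat c))) → χ.Realize v := by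
        intro χ hχ
        have hmemp : {J : Finset ι | (χ.relabel Sum.inl).Realize (Sum.elim (Wt J) prm)}
            ∈ (U : Filter (Finset ι)) := by
          refine Filter.univ_mem' fun J => ?_
          show (χ.relabel Sum.inl).Realize (Sum.elim (Wt J) prm)
          rw [Formula.realize_relabel, Sum.elim_comp_inl]
          have h2 : Wt J = ⇑(g J : M ≃[L] M) ∘ Sum.elim (flat b) (Sum.elim a (flat c)) := by
            funext z
            rcases z with k | z
            · rfl
            · rcases z with j | iv <;> rfl
          rw [h2, StrongHomClass.realize_formula]
          exact hχ
        have hre := hvp _ hmemp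
        rw [Formula.realize_relabel, Sum.elim_comp_inl] at hre
        exact hre
      intro χ
      refine ⟨hdir χ, fun hχ => ?_⟩
      by_contra hne
      have h2 := hdir χ.not (by rw [Formula.realize_not]; exact hne)
      rw [Formula.realize_not] at h2
      exact h2 hχ
    obtain ⟨f, hf⟩ := hM.2.1 _ _ v hA hsame
    have hfa : (f • a : γ → M) = fun j => v (Sum.inr (Sum.inl j)) :=
      funext fun j => hf (Sum.inr (Sum.inl j))
    have hfE : f ∈ AutE pE a := by
      refine MulAction.mem_stabilizer_iff.mpr ?_
      rw [smul_fclass, hfa, fclass_eq_of_frel hE haE]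
    have hfc : toGS pE a hInv ⟨f, hfE⟩ • c = d := by
      apply flat_inj
      rw [flat_toGS_smul]
      funext iv
      exact (hf (Sum.inr (Sum.inr iv))).trans (hcd iv)
    have hq0Sb : tpOver (L := L) (flat b) ((⟨f, hfE⟩ : Ge pE a) • flat b) ∈ Sb pE a b :=
      ⟨⟨f, hfE⟩, rfl⟩
    have hZcl : @IsClosed _ (typeSetTop (Sb pE a b))
        (nub κ pE a hInv b ⁻¹' (projb κ pE a hInv '' ↑H)) := isClosed_coinduced.mp hcl
    obtain ⟨D, hDcl, hDpre⟩ := isClosed_induced_iff.mp hZcl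
    set rD : ((ιb × V) ⊕ (ιb × V)) → (((ιb × V) ⊕ (γ ⊕ (ι × V))) ⊕ ((ιb × V) ⊕ (γ ⊕ (ι × V)))) :=
      Sum.elim (fun k => Sum.inl (Sum.inl k)) (fun k => Sum.inr (Sum.inl k)) with hrD
    have hRJ : ∀ (θ : L.Formula ((ιb × V) ⊕ (ιb × V))) (J : Finset ι),
        (θ.relabel rD).Realize (Sum.elim (Wt J) prm)
          ↔ θ ∈ tpOver (L := L) (flat b) (g J • flat b) := by
      intro θ J
      rw [Formula.realize_relabel]
      have he : Sum.elim (Wt J) prm ∘ rD = Sum.elim (g J • flat b) (flat b) := by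
        funext z; cases z <;> rfl
      rw [he]
      exact Iff.rfl
    have hRv : ∀ θ : L.Formula ((ιb × V) ⊕ (ιb × V)),
        (θ.relabel rD).Realize (Sum.elim v prm)
          ↔ θ ∈ tpOver (L := L) (flat b) ((⟨f, hfE⟩ : Ge pE a) • flat b) := by
      intro θ
      rw [Formula.realize_relabel]
      have he : Sum.elim v prm ∘ rD = Sum.elim ((⟨f, hfE⟩ : Ge pE a) • flat b) (flat b) := by
        funext z
        cases z with
        | inl k => exact (hf (Sum.inl k)).symm
        | inr k => rfl
      rw [he]
      exact Iff.rfl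
    have hZJ : ∀ J : Finset ι, (⟨tpOver (L := L) (flat b) (g J • flat b), ⟨g J, rfl⟩⟩ : ↥(Sb pE a b)) ∈
        nub κ pE a hInv b ⁻¹' (projb κ pE a hInv '' ↑H) := by
      intro J
      have hnu := nub_spec κ pE a hM hV hInv b hb hbdcl
        ⟨tpOver (L := L) (flat b) (g J • flat b), ⟨g J, rfl⟩⟩ (g J) rfl
      rw [Set.mem_preimage, hnu, hgGS J]
      exact Set.mem_image_of_mem _ (hhH J)
    have hmemD : (fun θ : L.Formula ((ιb × V) ⊕ (ιb × V)) =>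
        (tpOver (L := L) (flat b) ((⟨f, hfE⟩ : Ge pE a) • flat b)).boolIndicator θ) ∈ D := by
      have hsubD : closure ((fun (p' : ↥(Sb pE a b)) (θ : L.Formula ((ιb × V) ⊕ (ιb × V))) =>
          (↑p' : Set (L.Formula ((ιb × V) ⊕ (ιb × V)))).boolIndicator θ) ''
          (nub κ pE a hInv b ⁻¹' (projb κ pE a hInv '' ↑H))) ⊆ D :=
        closure_minimal (Set.image_subset_iff.mpr hDpre.ge) hDcl
      refine hsubD ?_
      rw [mem_closure_iff]
      intro O hO hqO
      obtain ⟨I, uu, hIu, hsub⟩ := isOpen_pi_iff.mp hO _ hqO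
      have hkey : ∀ θ ∈ I, {J : Finset ι | (θ ∈ tpOver (L := L) (flat b) (g J • flat b)) ↔
          θ ∈ tpOver (L := L) (flat b) ((⟨f, hfE⟩ : Ge pE a) • flat b)}
          ∈ (U : Filter (Finset ι)) := by
        intro θ hθI
        by_cases hUθ : {J : Finset ι | (θ.relabel rD).Realize (Sum.elim (Wt J) prm)}
            ∈ (U : Filter (Finset ι))
        · have hq := (hRv θ).mp (hvp _ hUθ)
          refine Filter.mem_of_superset hUθ fun J hJ => ?_
          exact iff_of_true ((hRJ θ J).mp hJ) hq
        · have hcomp : {J : Finset ι | (θ.relabel rD).Realize (Sum.elim (Wt J) prm)}ᶜ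
              ∈ (U : Filter (Finset ι)) := Ultrafilter.compl_mem_iff_notMem.mpr hUθ
          have hnq : ¬ θ ∈ tpOver (L := L) (flat b) ((⟨f, hfE⟩ : Ge pE a) • flat b) := by
            intro hq
            have hUn : {J : Finset ι | ((θ.relabel rD).not).Realize (Sum.elim (Wt J) prm)}
                ∈ (U : Filter (Finset ι)) := by
              refine Filter.mem_of_superset hcomp fun J hJ => ?_
              show ((θ.relabel rD).not).Realize (Sum.elim (Wt J) prm)
              rw [Formula.realize_not]
              exact hJ
            have h2 := hvp _ hUn
            rw [Formula.realize_not] at h2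
            exact h2 ((hRv θ).mpr hq)
          refine Filter.mem_of_superset hcomp fun J hJ => ?_
          exact iff_of_false (fun hmem => hJ ((hRJ θ J).mpr hmem)) hnq
      have hint := (Filter.biInter_finset_mem I).mpr hkey
      obtain ⟨J₀, hJ₀⟩ := Filter.nonempty_of_mem hint
      have hiff : ∀ θ ∈ I, ((θ ∈ tpOver (L := L) (flat b) (g J₀ • flat b)) ↔
          θ ∈ tpOver (L := L) (flat b) ((⟨f, hfE⟩ : Ge pE a) • flat b)) :=
        fun θ hθ => Set.mem_iInter₂.mp hJ₀ θ hθ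
      refine ⟨(fun θ : L.Formula ((ιb × V) ⊕ (ιb × V)) =>
        (tpOver (L := L) (flat b) (g J₀ • flat b)).boolIndicator θ), hsub ?_,
        Set.mem_image_of_mem _ (hZJ J₀)⟩
      rw [Set.mem_pi]
      intro θ hθ
      have hθI : θ ∈ I := Finset.mem_coe.mp hθ
      have hbool : (tpOver (L := L) (flat b) (g J₀ • flat b)).boolIndicator θ
          = (tpOver (L := L) (flat b) ((⟨f, hfE⟩ : Ge pE a) • flat b)).boolIndicator θ := by
        by_cases hmem : θ ∈ tpOver (L := L) (flat b) ((⟨f, hfE⟩ : Ge pE a) • flat b)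
        · rw [(Set.mem_iff_boolIndicator _ θ).mp ((hiff θ hθI).mpr hmem),
            (Set.mem_iff_boolIndicator _ θ).mp hmem]
        · rw [(Set.notMem_iff_boolIndicator _ θ).mp (fun hx => hmem ((hiff θ hθI).mp hx)),
            (Set.notMem_iff_boolIndicator _ θ).mp hmem]
      show (tpOver (L := L) (flat b) (g J₀ • flat b)).boolIndicator θ ∈ uu θ
      rw [hbool]
      exact (hIu θ hθI).2
    have hq0Z : (⟨tpOver (L := L) (flat b) ((⟨f, hfE⟩ : Ge pE a) • flat b), hq0Sb⟩ : ↥(Sb pE a b)) ∈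
        nub κ pE a hInv b ⁻¹' (projb κ pE a hInv '' ↑H) := by
      rw [← hDpre]
      exact hmemD
    rw [Set.mem_preimage, nub_spec κ pE a hM hV hInv b hb hbdcl _ ⟨f, hfE⟩ rfl] at hq0Z
    obtain ⟨h', hh'H, hh'eq⟩ := hq0Z
    have hmemN : h'⁻¹ * toGS pE a hInv ⟨f, hfE⟩ ∈ AutfLS κ pE a hInv :=
      (QuotientGroup.eq (s := AutfLS κ pE a hInv)).mp hh'eq
    have hσH : toGS pE a hInv ⟨f, hfE⟩ ∈ H := by
      have h2 := H.mul_mem hh'H (hLH hmemN)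
      rwa [mul_inv_cancel_left] at h2
    exact ⟨toGS pE a hInv ⟨f, hfE⟩, hσH, hfc⟩


end Statements

end RelLascar
end

section
/- Let {e_i : i < λ} be a small set of hyperimaginaries such that for each i < λ, some representative of e_i is a tuple of realizations of Σ. Then ⋂_{i<λ} Aut_{e_i}(Σ) = Aut_{{e_i : i<λ}}(Σ), where Aut_{e_i}(Σ) = ξ[Aut_{e_i}(𝔠)] and Aut_{{e_i : i<λ}}(Σ) = ξ[⋂_{i<λ} Aut_{e_i}(𝔠)], ξ being the restriction map Aut_e(𝔠) → Aut_e(Σ). -/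
/- Framework: relativized Lascar groups of a first-order theory over a
hyperimaginary, following "Relativized Galois groups of first order theories
over a hyperimaginary" by H. Lee and J. Lee. -/

open FirstOrder Cardinal Pointwise

universe u

namespace RelLascar

variable {L : FirstOrder.Language.{u, u}} {M : Type u} [L.Structure M]

variable (κ : Cardinal.{u})

section Statements

variable {γ : Type u} (pE : Set (L.Formula (γ ⊕ γ))) (a : γ → M)
variable {V β : Type u} {pS : Set (L.Formula (V ⊕ β))} {bp : β → M}



theorem smul_Fclass' {δ : Type u} (pF : Set (L.Formula (δ ⊕ δ))) (f : M ≃[L] M)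
    (x : δ → M) : f • Fclass (M := M) pF x = Fclass pF (f • x) := by
  ext y
  rw [Set.mem_smul_set_iff_inv_smul_mem]
  constructor
  · intro h φ hφ
    have := h φ hφ
    rw [← FirstOrder.Language.StrongHomClass.realize_formula f] at this
    convert this using 2
    funext z
    cases z with
    | inl i => rfl
    | inr i =>
      show y i = f (f⁻¹ • y $ i)
      exact (f.apply_symm_apply (y i)).symm
  · intro h φ hφ
    have := h φ hφ
    rw [← FirstOrder.Language.StrongHomClass.realize_formula f]
    convert this using 2
    funext z
    cases z with
    | inl i => rfl
    | inr i =>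
      show f (f⁻¹ • y $ i) = y i
      exact f.apply_symm_apply (y i)

/-- Remark 2.13: for a small family of hyperimaginaries
`e_i`, each having a representative which is a tuple of realizations of `Σ`,
`⋂_i Aut_{e_i}(Σ) = Aut_{{e_i : i}}(Σ)`. -/
theorem iInter_image_fixers_eq_image_iInter (hM : IsMonster κ L M) (hγ : #γ < κ)
    (hE : Equivalence (Frel (M := M) pE)) (hV : #V < κ) (hβ : #β < κ)
    (hInv : SolInv pE a pS bp)
    {lam : Type u} (hlam : #lam < κ)
    {ιf : lam → Type u} (hιf : ∀ i, #(ιf i) < κ)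
    (pF : ∀ i, Set (L.Formula ((ιf i × V) ⊕ (ιf i × V))))
    (hF : ∀ i, Equivalence (Frel (M := M) (pF i)))
    (c : ∀ i, ιf i → SolT pS bp) :
    (⋂ i, ⇑(toGS pE a hInv) '' {f : Ge pE a | FixesClass pE a f (pF i) (flat (c i))}) =
      ⇑(toGS pE a hInv) '' ⋂ i, {f : Ge pE a | FixesClass pE a f (pF i) (flat (c i))} := by
  refine Set.Subset.antisymm ?_ (Set.image_iInter_subset _ _)
  intro tau htau
  -- pick g with toGS g = tau
  obtain ⟨g, hg⟩ := (resPerm pE a hInv).rangeRestrict_surjective tau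
  refine ⟨g, Set.mem_iInter.mpr fun i => ?_, hg⟩
  obtain ⟨fi, hfix, hfi⟩ := Set.mem_iInter.mp htau i
  -- g and fi restrict to the same permutation of Σ(𝔠)
  have hres : resPerm pE a hInv g = resPerm pE a hInv fi := by
    have : toGS pE a hInv g = toGS pE a hInv fi := hg.trans hfi.symm
    exact congrArg Subtype.val this
  -- hence g and fi agree on flat (c i)
  have hagree : (g : M ≃[L] M) • flat (c i) = (fi : M ≃[L] M) • flat (c i) := by
    funext p
    have h1 : resPerm pE a hInv g ⟨c i p.1, (c i p.1).2⟩ =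
        resPerm pE a hInv fi ⟨c i p.1, (c i p.1).2⟩ := by rw [hres]
    have h2 : (g : M ≃[L] M) • ((c i p.1 : V → M)) =
        (fi : M ≃[L] M) • ((c i p.1 : V → M)) := congrArg Subtype.val h1
    exact congrFun h2 p.2
  show (g : M ≃[L] M) • Fclass (pF i) (flat (c i)) = Fclass (pF i) (flat (c i))
  have hfix' : (fi : M ≃[L] M) • Fclass (pF i) (flat (c i)) =
      Fclass (pF i) (flat (c i)) := hfix
  rw [smul_Fclass', hagree, ← smul_Fclass', hfix']

end Statements

end RelLascar
end
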